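/- Let m be an odd cube-free positive integer, i.e., m is odd and no prime cube divides m. If G is a finite group of order m, then G has a basis. -/

import Mathlib

/-!
Induct on `|G|`. Let `p` be the smallest prime divisor of `|G|` and `P` a Sylow `p`-subgroup;
cube-freeness gives `|P| ∣ p²`, so `P` is abelian. An element of prime order `q` of
`N(P)/C(P) ↪ Aut(P)` has `q ≠ p` (as `P ≤ C(P)` is Sylow), and counting its fixed points on `P`
modulo `q` gives `q ∣ p ^ j - 1` with `j ≤ 2`, hence `q ∣ (p - 1)(p + 1)`. Since `q > p` and both
are odd, this is impossible; so `N(P) = C(P)` and Burnside's transfer theorem gives a normal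
complement `K` of `P`. Bases of `K` (by induction) and of `P` (a product of at most two cyclic
groups) then concatenate to a basis of `G = K P`.
-/

/-- A sequence `b : Fin n → G` of non-identity elements is a *basis* for the group `G`
if every `g ∈ G` is uniquely of the form `b 0 ^ a 0 * ⋯ * b (n-1) ^ a (n-1)`
with `a i ∈ {0, …, orderOf (b i) - 1}`. -/
def IsGroupBasis {G : Type*} [Group G] {n : ℕ} (b : Fin n → G) : Prop :=
  (∀ i, b i ≠ 1) ∧
    Function.Bijective (fun a : ∀ i, Fin (orderOf (b i)) =>
      (List.ofFn fun i => b i ^ ((a i : ℕ))).prod)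

/-- `G` has a basis. -/
def HasGroupBasis (G : Type*) [Group G] : Prop :=
  ∃ (n : ℕ) (b : Fin n → G), IsGroupBasis b

open Subgroup

namespace IsGroupBasis

variable {G : Type*} [Group G] {n : ℕ} {b : Fin n → G}

theorem prod_orderOf_eq_card (hb : IsGroupBasis b) : ∏ i, orderOf (b i) = Nat.card G := by
  simpa [Nat.card_pi] using Nat.card_congr (Equiv.ofBijective _ hb.2)

theorem exists_prod_pow_eq (hb : IsGroupBasis b) (g : G) :
    ∃ e : Fin n → ℕ, (List.ofFn fun i => b i ^ e i).prod = g := by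
  obtain ⟨a, ha⟩ := hb.2.2 g
  exact ⟨fun i => a i, ha⟩

theorem of_prod_orderOf_eq_card [Finite G] (hb : ∀ i, b i ≠ 1)
    (hcard : ∏ i, orderOf (b i) = Nat.card G)
    (hspan : ∀ g, ∃ e : Fin n → ℕ, (List.ofFn fun i => b i ^ e i).prod = g) :
    IsGroupBasis b := by
  refine ⟨hb, Function.Surjective.bijective_of_nat_card_le (fun g => ?_) (by simp [hcard])⟩
  obtain ⟨e, rfl⟩ := hspan g
  exact ⟨fun i => ⟨e i % orderOf (b i), Nat.mod_lt _ (orderOf_pos _)⟩, by simp [pow_mod_orderOf]⟩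

end IsGroupBasis

section HasGroupBasis

variable {G : Type*} [Group G] [Finite G]

theorem hasGroupBasis_of_subsingleton [Subsingleton G] : HasGroupBasis G :=
  ⟨0, Fin.elim0, .of_prod_orderOf_eq_card (fun i => i.elim0) (by simp [Nat.card_unique])
    fun _ => ⟨Fin.elim0, Subsingleton.elim _ _⟩⟩

theorem hasGroupBasis_of_isCyclic [IsCyclic G] : HasGroupBasis G := by
  rcases subsingleton_or_nontrivial G with _ | _
  · exact hasGroupBasis_of_subsingleton
  obtain ⟨g, hg⟩ := IsCyclic.exists_generator (α := G)
  have hord : orderOf g = Nat.card G := orderOf_eq_card_of_forall_mem_zpowers hg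
  have hg1 : g ≠ 1 := by
    rintro rfl
    exact Finite.one_lt_card.ne (by simpa using hord)
  refine ⟨1, fun _ => g, .of_prod_orderOf_eq_card (fun _ => hg1) (by simp [hord]) fun x => ?_⟩
  obtain ⟨k, hk⟩ := mem_powers_iff_mem_zpowers.mpr (hg x)
  exact ⟨fun _ => k, by simpa using hk⟩

theorem Subgroup.IsComplement'.hasGroupBasis {H K : Subgroup G} (hc : H.IsComplement' K)
    (hH : HasGroupBasis H) (hK : HasGroupBasis K) : HasGroupBasis G := by
  obtain ⟨n₁, b₁, hb₁⟩ := hH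
  obtain ⟨n₂, b₂, hb₂⟩ := hK
  refine ⟨n₁ + n₂, Fin.append (fun i => (b₁ i : G)) (fun j => (b₂ j : G)),
    .of_prod_orderOf_eq_card ?_ ?_ fun g => ?_⟩
  · exact Fin.addCases (fun i => by simpa using hb₁.1 i) fun j => by simpa using hb₂.1 j
  · simp [Fin.prod_univ_add, hb₁.prod_orderOf_eq_card, hb₂.prod_orderOf_eq_card, hc.card_mul_card]
  obtain ⟨⟨h, k⟩, rfl⟩ := hc.2 g
  obtain ⟨e₁, rfl⟩ := hb₁.exists_prod_pow_eq h
  obtain ⟨e₂, rfl⟩ := hb₂.exists_prod_pow_eq k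
  exact ⟨Fin.append e₁ e₂, by simp [List.ofFn_add, Function.comp_def]⟩

end HasGroupBasis

section PrimeSquare

variable {G : Type*} [Group G] {p : ℕ} [hp : Fact p.Prime]

theorem isCyclic_or_card_eq_prime_sq (h : Nat.card G ∣ p ^ 2) :
    IsCyclic G ∨ Nat.card G = p ^ 2 := by
  obtain ⟨k, hk, hcard⟩ := (Nat.dvd_prime_pow hp.out).mp h
  rcases hk.lt_or_eq with hk | rfl
  · refine .inl (isCyclic_of_card_dvd_prime (p := p) ?_)
    rw [hcard]
    exact (pow_dvd_pow p (by omega : k ≤ 1)).trans (pow_one p).dvd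
  · exact .inr hcard

theorem isMulCommutative_of_card_dvd_prime_sq (h : Nat.card G ∣ p ^ 2) : IsMulCommutative G := by
  have : Finite G :=
    Nat.finite_of_card_ne_zero (ne_zero_of_dvd_ne_zero (pow_pos hp.out.pos 2).ne' h)
  rcases isCyclic_or_card_eq_prime_sq h with hcyc | hcard
  · infer_instance
  · exact IsPGroup.isMulCommutative_of_card_eq_prime_sq hcard

theorem orderOf_eq_prime_of_card_eq_prime_sq [Finite G] (hcard : Nat.card G = p ^ 2)
    (hcyc : ¬ IsCyclic G) {g : G} (hg : g ≠ 1) : orderOf g = p := by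
  obtain ⟨k, hk, hg'⟩ := (Nat.dvd_prime_pow hp.out).mp (hcard ▸ orderOf_dvd_natCard g)
  interval_cases k
  · exact absurd (orderOf_eq_one_iff.mp hg') hg
  · exact hg'.trans (pow_one p)
  · exact absurd (isCyclic_of_orderOf_eq_card g (hg'.trans hcard.symm)) hcyc

theorem hasGroupBasis_of_card_dvd_prime_sq [Finite G] (h : Nat.card G ∣ p ^ 2) :
    HasGroupBasis G := by
  by_cases hcyc : IsCyclic G
  · exact hasGroupBasis_of_isCyclic
  have hcard : Nat.card G = p ^ 2 := (isCyclic_or_card_eq_prime_sq h).resolve_left hcyc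
  have hzp (g : G) (hg : g ≠ 1) : Nat.card (zpowers g) = p := by
    rw [Nat.card_zpowers, orderOf_eq_prime_of_card_eq_prime_sq hcard hcyc hg]
  have : Nontrivial G := not_subsingleton_iff_nontrivial.mp fun _ => hcyc isCyclic_of_subsingleton
  obtain ⟨x, hx⟩ := exists_ne (1 : G)
  obtain ⟨y, hy⟩ : ∃ y : G, y ∉ zpowers x := by
    by_contra! hy
    exact hcyc (isCyclic_iff_exists_zpowers_eq_top.mpr ⟨x, (eq_top_iff' _).mpr hy⟩)
  have hy1 : y ≠ 1 := fun h1 => hy (h1 ▸ one_mem _)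
  have hdisj : Disjoint (zpowers x) (zpowers y) := by
    rw [disjoint_iff, ← card_eq_one]
    refine ((Nat.dvd_prime hp.out).mp ((card_dvd_of_le inf_le_right).trans
      (hzp y hy1).dvd)).resolve_right fun hp' => hy ?_
    have hinf : zpowers x ⊓ zpowers y = zpowers y :=
      eq_of_le_of_card_ge inf_le_right (by rw [hp', hzp y hy1])
    exact (mem_inf.mp (hinf.ge (mem_zpowers y))).1
  have hc : (zpowers x).IsComplement' (zpowers y) :=
    isComplement'_of_card_mul_and_disjoint (by rw [hzp x hx, hzp y hy1, hcard, sq]) hdisj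
  exact hc.hasGroupBasis hasGroupBasis_of_isCyclic hasGroupBasis_of_isCyclic

end PrimeSquare

theorem Nat.Prime.not_dvd_sq_sub_one {p q : ℕ} (hq : q.Prime) (hp : Odd p) (hp1 : 1 < p)
    (hpq : p < q) : ¬ q ∣ p ^ 2 - 1 := by
  rw [show p ^ 2 - 1 = (p + 1) * (p - 1) by simpa using Nat.sq_sub_sq p 1]
  intro h
  rcases hq.dvd_mul.mp h with h | h
  · have hq' : q = p + 1 := by have := Nat.le_of_dvd (by omega) h; omega
    have := hq.even_iff.mp (hq' ▸ hp.add_one)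
    omega
  · have := Nat.le_of_dvd (by omega) h
    omega

theorem MulAut.exists_dvd_pow_sub_one_of_orderOf_eq_prime {H : Type*} [Group H] [Finite H]
    {p q : ℕ} [hp : Fact p.Prime] [hq : Fact q.Prime] (hH : IsPGroup p H) (hqp : q ≠ p)
    {σ : MulAut H} (hσ : orderOf σ = q) : ∃ j, 0 < j ∧ p ^ j ∣ Nat.card H ∧ q ∣ p ^ j - 1 := by
  obtain ⟨a, ha⟩ := hH.exists_card_eq
  let F := FixedPoints.subgroup (zpowers σ) H
  have hmod : Nat.card H ≡ Nat.card F [MOD q] :=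
    (IsPGroup.of_card (by rw [Nat.card_zpowers, hσ, pow_one])).card_modEq_card_fixedPoints H
  obtain ⟨k, hk, hF⟩ := (Nat.dvd_prime_pow hp.out).mp (ha ▸ F.card_subgroup_dvd_card)
  have hka : k < a := by
    refine hk.lt_of_ne fun hka => hq.out.one_lt.ne' ?_
    have hFtop : F = ⊤ := F.card_eq_iff_eq_top.mp (by rw [hF, ha, hka])
    have hσ1 : σ = 1 := MulEquiv.ext fun x =>
      (hFtop ▸ mem_top x : x ∈ F) ⟨σ, mem_zpowers σ⟩
    rw [← hσ, hσ1, orderOf_one]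
  refine ⟨a - k, by omega, ha ▸ pow_dvd_pow p (Nat.sub_le a k), ?_⟩
  have hcop : Nat.Coprime q (p ^ k) :=
    ((Nat.coprime_primes hq.out hp.out).mpr hqp).pow_right k
  rw [ha, hF, ← Nat.sub_add_cancel hka.le, pow_add] at hmod
  have hmod' : p ^ (a - k) ≡ 1 [MOD q] :=
    Nat.ModEq.cancel_left_of_coprime hcop (by simpa [mul_comm] using hmod)
  exact (Nat.modEq_iff_dvd' (Nat.one_le_pow _ _ hp.out.pos)).mp hmod'.symm

namespace Sylow

variable {G : Type*} [Group G] [Finite G] {p : ℕ} [hp : Fact p.Prime]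

theorem card_dvd_pow_of_not_pow_succ_dvd (P : Sylow p G) {n : ℕ}
    (hn : ¬ p ^ (n + 1) ∣ Nat.card G) : Nat.card P ∣ p ^ n := by
  obtain ⟨a, ha⟩ := P.2.exists_card_eq
  rw [ha]
  refine pow_dvd_pow p (not_lt.mp fun han => hn ?_)
  exact (pow_dvd_pow p han).trans (ha ▸ card_subgroup_dvd_card (P : Subgroup G))

theorem normalizer_le_centralizer_of_card_dvd_prime_sq (hmin : (Nat.card G).minFac = p)
    (hodd : Odd p) (P : Sylow p G) (hP : Nat.card P ∣ p ^ 2) :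
    normalizer P ≤ centralizer (P : Set G) := by
  have := isMulCommutative_of_card_dvd_prime_sq hP
  rw [← relIndex_eq_one]
  by_contra hne
  obtain ⟨q, hq, hqN⟩ := Nat.exists_prime_and_dvd hne
  have := Fact.mk hq
  have hpN : ¬ p ∣ (centralizer (P : Set G)).relIndex (normalizer P) := fun h =>
    P.not_dvd_index (h.trans ((relIndex_dvd_of_le_left _ (le_centralizer (P : Subgroup G))).trans
      (relIndex_dvd_index_of_le le_normalizer)))
  have hqp : q ≠ p := by
    rintro rfl
    exact hpN hqN
  have hpq : p < q := by
    refine lt_of_le_of_ne ?_ hqp.symm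
    rw [← hmin]
    exact Nat.minFac_le_of_dvd hq.two_le
      (hqN.trans ((relIndex_dvd_card _ _).trans (card_subgroup_dvd_card _)))
  obtain ⟨σ, hσ⟩ : ∃ σ : MulAut P, orderOf σ = q := by
    have hqN' : q ∣ Nat.card (normalizer P ⧸ P.normalizerMonoidHom.ker) := by
      rw [normalizerMonoidHom_ker]
      exact hqN
    obtain ⟨x, hx⟩ := exists_prime_orderOf_dvd_card' q hqN'
    exact ⟨_, (orderOf_injective _ (QuotientGroup.kerLift_injective _) x).trans hx⟩
  obtain ⟨j, hj, hjP, hqj⟩ := MulAut.exists_dvd_pow_sub_one_of_orderOf_eq_prime P.2 hqp hσ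
  have hj2 : j ≤ 2 := (Nat.pow_dvd_pow_iff_le_right hp.out.one_lt).mp (hjP.trans hP)
  refine hq.not_dvd_sq_sub_one hodd hp.out.one_lt hpq (hqj.trans ?_)
  interval_cases j
  · simpa using Nat.sub_one_dvd_pow_sub_one p 2
  · rfl

end Sylow

theorem hasGroupBasis_of_card_odd_cubeFree_general {G : Type*} [Group G] [Finite G]
    (m : ℕ) (hodd : Odd m) (hcf : ∀ p : ℕ, p.Prime → ¬ p ^ 3 ∣ m)
    (hcard : Nat.card G = m) :
    HasGroupBasis G := by
  induction m using Nat.strong_induction_on generalizing G with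
  | _ m ih =>
  subst hcard
  rcases eq_or_ne (Nat.card G) 1 with h1 | h1
  · have := (Nat.card_eq_one_iff_unique.mp h1).1
    exact hasGroupBasis_of_subsingleton
  have := Fact.mk (Nat.minFac_prime h1)
  obtain ⟨P⟩ : Nonempty (Sylow (Nat.card G).minFac G) := inferInstance
  have hP : Nat.card P ∣ (Nat.card G).minFac ^ 2 :=
    P.card_dvd_pow_of_not_pow_succ_dvd (hcf _ Fact.out)
  have hNC := P.normalizer_le_centralizer_of_card_dvd_prime_sq rfl
    (hodd.of_dvd_nat (Nat.minFac_dvd _)) hP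
  have hc := MonoidHom.ker_transferSylow_isComplement' P hNC
  set K := (MonoidHom.transferSylow P hNC).ker
  have hKG : Nat.card K ∣ Nat.card G := card_subgroup_dvd_card K
  have hKlt : Nat.card K < Nat.card G := by
    rw [← hc.card_mul_card]
    exact lt_mul_of_one_lt_right Nat.card_pos
      ((one_lt_card_iff_ne_bot _).mpr (P.ne_bot_of_dvd_card (Nat.minFac_dvd _)))
  exact hc.hasGroupBasis
    (ih _ hKlt (hodd.of_dvd_nat hKG) (fun q hq h => hcf q hq (h.trans hKG)) rfl)
    (hasGroupBasis_of_card_dvd_prime_sq hP)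

/-- If `m` is an odd cube-free positive integer and `G` is a finite group of order `m`,
then `G` has a basis. -/
theorem hasGroupBasis_of_card_odd_cubeFree {G : Type*} [Group G] [Finite G]
    (m : ℕ) (hm : 0 < m) (hodd : Odd m) (hcf : ∀ p : ℕ, p.Prime → ¬ p ^ 3 ∣ m)
    (hcard : Nat.card G = m) :
    HasGroupBasis G :=
  hasGroupBasis_of_card_odd_cubeFree_general m hodd hcf hcard
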